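/- Let X be a Banach space, C a countable subset of X, and G(C) a countable subset of X* such that ‖x*‖ = sup⟨x*, C ∩ B_X⟩ for every x* in the rational linear span of G(C), where the closed linear span of C equals V. Then ‖x*|_V‖ = ‖x*‖ for every x* in the closed linear span of G(C). -/

import Mathlib

/-!
On the rational span of `D` the supremum hypothesis forces `‖x‖ ≤ ‖x|_V‖`, since `C ⊆ V`;
restriction never increases the norm, so `‖x|_V‖ = ‖x‖` there. This equality defines a closed
set of functionals, and the real span of `D` lies in the closure of its rational span because
`ℚ` is dense in `ℝ`.
-/

open Metric

theorem Submodule.span_real_subset_closure_span_rat {E : Type*} [AddCommGroup E] [Module ℝ E]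
    [Module ℚ E] [TopologicalSpace E] [ContinuousAdd E] [ContinuousSMul ℝ E] (s : Set E) :
    (span ℝ s : Set E) ⊆ closure (span ℚ s) := by
  let closureSpanRat : Submodule ℝ E :=
    { carrier := closure (span ℚ s)
      zero_mem' := subset_closure (zero_mem _)
      add_mem' := fun hx hy =>
        map_mem_closure₂ continuous_add hx hy fun _ hx _ hy => add_mem hx hy
      smul_mem' := fun r x hx => by
        refine map_mem_closure₂ continuous_smul (Rat.denseRange_cast r) hx ?_
        rintro _ ⟨q, rfl⟩ y hy
        rw [ratCast_smul_eq ℝ ℚ q y]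
        exact smul_mem _ q hy }
  exact span_le (p := closureSpanRat).mpr (subset_span.trans subset_closure)

namespace ContinuousLinearMap

variable {𝕜 E F : Type*} [NontriviallyNormedField 𝕜] [SeminormedAddCommGroup E]
  [NormedSpace 𝕜 E] [SeminormedAddCommGroup F] [NormedSpace 𝕜 F]

theorem norm_comp_subtypeL_le (f : E →L[𝕜] F) (V : Submodule 𝕜 E) :
    ‖f.comp V.subtypeL‖ ≤ ‖f‖ :=
  (opNorm_comp_le f V.subtypeL).trans
    (mul_le_of_le_one_right (norm_nonneg f) (Submodule.norm_subtypeL_le V))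

theorem isClosed_setOf_norm_comp_subtypeL_eq (V : Submodule 𝕜 E) :
    IsClosed {f : E →L[𝕜] F | ‖f.comp V.subtypeL‖ = ‖f‖} :=
  isClosed_eq (continuous_norm.comp ((compL 𝕜 V E F).flip V.subtypeL).continuous)
    continuous_norm

end ContinuousLinearMap

theorem ContinuousLinearMap.sSup_image_le_norm_comp_subtypeL {E : Type*}
    [SeminormedAddCommGroup E] [NormedSpace ℝ E] (f : E →L[ℝ] ℝ) (V : Submodule ℝ E)
    {S : Set E} (hS : S ⊆ V) :
    sSup (f '' (S ∩ closedBall 0 1)) ≤ ‖f.comp V.subtypeL‖ := by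
  refine Real.sSup_le ?_ (opNorm_nonneg _)
  rintro _ ⟨y, ⟨hyS, hy⟩, rfl⟩
  have hy : ‖(⟨y, hS hyS⟩ : V)‖ ≤ 1 := mem_closedBall_zero_iff.mp hy
  calc f y ≤ ‖(f.comp V.subtypeL) ⟨y, hS hyS⟩‖ := le_abs_self (f y)
    _ ≤ ‖f.comp V.subtypeL‖ * 1 := le_opNorm_of_le _ hy
    _ = ‖f.comp V.subtypeL‖ := mul_one _

theorem norm_eq_restriction_norm_of_sup_on_countable_set_general
    {X : Type*} [NormedAddCommGroup X] [NormedSpace ℝ X]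
    (C : Set X)
    (D : Set (X →L[ℝ] ℝ))
    (V : Submodule ℝ X) (hV : V = (Submodule.span ℝ C).topologicalClosure)
    (hsup : ∀ x ∈ Submodule.span ℚ D,
      ‖x‖ = sSup ((fun y => x y) '' (C ∩ Metric.closedBall 0 1))) :
    ∀ x ∈ (Submodule.span ℝ D).topologicalClosure,
      ‖x.comp V.subtypeL‖ = ‖x‖ := by
  intro x hx
  have hCV : C ⊆ V := hV ▸ Submodule.subset_span.trans (Submodule.le_topologicalClosure _)
  have hrat : (Submodule.span ℚ D : Set (X →L[ℝ] ℝ)) ⊆ {f | ‖f.comp V.subtypeL‖ = ‖f‖} :=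
    fun f hf => le_antisymm (f.norm_comp_subtypeL_le V)
      ((hsup f hf).trans_le (f.sSup_image_le_norm_comp_subtypeL V hCV))
  have hreal : closure (Submodule.span ℝ D : Set (X →L[ℝ] ℝ)) ⊆ closure (Submodule.span ℚ D) :=
    closure_minimal (Submodule.span_real_subset_closure_span_rat D) isClosed_closure
  exact closure_minimal hrat (ContinuousLinearMap.isClosed_setOf_norm_comp_subtypeL_eq V)
    (hreal hx)

/-- If every functional in the rational linear span of `G(C)` attains its norm as the
supremum over `C ∩ B_X`, then every functional in the closed linear span of `G(C)`
restricts isometrically to the closed linear span `V` of `C`. -/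
theorem norm_eq_restriction_norm_of_sup_on_countable_set
    {X : Type*} [NormedAddCommGroup X] [NormedSpace ℝ X] [CompleteSpace X]
    (C : Set X) (hC : C.Countable)
    (D : Set (X →L[ℝ] ℝ)) (hD : D.Countable)
    (V : Submodule ℝ X) (hV : V = (Submodule.span ℝ C).topologicalClosure)
    (hsup : ∀ x ∈ Submodule.span ℚ D,
      ‖x‖ = sSup ((fun y => x y) '' (C ∩ Metric.closedBall 0 1))) :
    ∀ x ∈ (Submodule.span ℝ D).topologicalClosure,
      ‖x.comp V.subtypeL‖ = ‖x‖ :=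
  norm_eq_restriction_norm_of_sup_on_countable_set_general C D V hV hsup
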